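/- Let Y : ℝ → ℝ satisfy Y' = -Y² + 11/76. Then for any C₀ ∈ ℝ, the function y = C₀ - (135/19)Y + 60Y³ satisfies the Kuramoto–Sivashinsky travelling-wave equation y''' + y² + y' - 2C₀y + C₀² - 2475/6859 = 0. -/

import Mathlib

/-!
Along a solution of `Y' = q(Y)` the chain rule turns differentiation of `p(Y)`, for a polynomial
`p`, into the polynomial operation `p ↦ p' q`. Hence every derivative of `y = p(Y)` is again a
polynomial in `Y`, and the travelling-wave equation reduces to an identity in `ℝ[X]`, checked by
expanding both sides.
-/

open Polynomial

/-- The derivative of `p(Y)` expressed through `Y`, when `Y' = q(Y)`. -/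
noncomputable def Polynomial.derivAlong {R : Type*} [CommSemiring R] (q p : R[X]) : R[X] :=
  derivative p * q

section DerivAlong

variable {𝕜 : Type*} [NontriviallyNormedField 𝕜] {Y : 𝕜 → 𝕜} {q : 𝕜[X]}

theorem hasDerivAt_eval_comp_of_hasDerivAt (hY : ∀ z, HasDerivAt Y (q.eval (Y z)) z)
    (p : 𝕜[X]) (z : 𝕜) :
    HasDerivAt (fun z => p.eval (Y z)) ((derivAlong q p).eval (Y z)) z := by
  rw [derivAlong, eval_mul]
  exact (p.hasDerivAt (Y z)).comp z (hY z)

theorem deriv_eval_comp_of_hasDerivAt (hY : ∀ z, HasDerivAt Y (q.eval (Y z)) z) (p : 𝕜[X]) :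
    deriv (fun z => p.eval (Y z)) = fun z => (derivAlong q p).eval (Y z) :=
  funext fun z => (hasDerivAt_eval_comp_of_hasDerivAt hY p z).deriv

theorem iterate_deriv_eval_comp_of_hasDerivAt (hY : ∀ z, HasDerivAt Y (q.eval (Y z)) z)
    (p : 𝕜[X]) (n : ℕ) :
    deriv^[n] (fun z => p.eval (Y z)) = fun z => ((derivAlong q)^[n] p).eval (Y z) := by
  induction n with
  | zero => rfl
  | succ n ih =>
    rw [Function.iterate_succ_apply', ih, deriv_eval_comp_of_hasDerivAt hY,
      Function.iterate_succ_apply']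

end DerivAlong

theorem ks_polynomial_identity (C₀ t : ℝ) :
    let q : ℝ[X] := C (11 / 76) - X ^ 2
    let p : ℝ[X] := C C₀ - C (135 / 19) * X + 60 * X ^ 3
    ((derivAlong q)^[3] p).eval t + (p.eval t) ^ 2 + (derivAlong q p).eval t
      - 2 * C₀ * p.eval t + C₀ ^ 2 - 2475 / 6859 = 0 := by
  simp only [Function.iterate_succ_apply', Function.iterate_zero_apply, derivAlong,
    derivative_add, derivative_sub, derivative_mul, derivative_C, derivative_X, derivative_X_pow,
    derivative_ofNat, eval_add, eval_sub, eval_mul, eval_pow, eval_C, eval_X, eval_ofNat,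
    eval_zero, eval_one, derivative_one, derivative_zero]
  ring

/-- If `Y' = -Y² + 11/76`, then `y = C₀ - (135/19)Y + 60Y³` solves the
Kuramoto–Sivashinsky travelling-wave equation
`y''' + y² + y' - 2C₀y + C₀² - 2475/6859 = 0`. -/
theorem ks_exact_solution_alpha2 (Y : ℝ → ℝ) (C₀ : ℝ)
    (hY : Differentiable ℝ Y)
    (hRic : ∀ z, deriv Y z = -(Y z) ^ 2 + 11 / 76)
    (y : ℝ → ℝ)
    (hydef : y = fun z => C₀ - (135 / 19) * Y z + 60 * (Y z) ^ 3) :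
    ∀ z, deriv (deriv (deriv y)) z + (y z) ^ 2 + deriv y z
      - 2 * C₀ * y z + C₀ ^ 2 - 2475 / 6859 = 0 := by
  set q : ℝ[X] := C (11 / 76) - X ^ 2
  set p : ℝ[X] := C C₀ - C (135 / 19) * X + 60 * X ^ 3
  have hflow : ∀ z, HasDerivAt Y (q.eval (Y z)) z := fun z => by
    simpa [q, hRic z, neg_add_eq_sub] using (hY z).hasDerivAt
  have hyp : y = fun z => p.eval (Y z) := by
    simp [hydef, p]
  have hy3 : deriv (deriv (deriv y)) = fun z => ((derivAlong q)^[3] p).eval (Y z) := by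
    rw [← iterate_deriv_eval_comp_of_hasDerivAt hflow, ← hyp]
    rfl
  intro z
  rw [hy3, hyp, deriv_eval_comp_of_hasDerivAt hflow]
  exact ks_polynomial_identity C₀ (Y z)
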